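/- arXiv:1901.03841 — 2 statements merged into one kernel-verified Lean document; each statement's English description precedes it below -/
import Mathlib

section
/- If positive integers m, n satisfy C(m,2) = C(n,8) + 1, then setting u = (n^2 - 7n + 12)/2 and v = 210m - 105, the pair (u,v) satisfies v^2 = 35u^4 - 350u^3 + 945u^2 - 630u + 99225. -/
/-- If positive integers m, n satisfy C(m,2) = C(n,8) + 1, then with
u = (n^2 - 7n + 12)/2 and v = 210m - 105, we have
v^2 = 35u^4 - 350u^3 + 945u^2 - 630u + 99225. -/
theorem stmt10 (m n : ℕ) (hm : 0 < m) (hn : 0 < n)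
    (h : m.choose 2 = n.choose 8 + 1)
    (u v : ℤ) (hu : u = ((n : ℤ) ^ 2 - 7 * (n : ℤ) + 12) / 2)
    (hv : v = 210 * (m : ℤ) - 105) :
    v ^ 2 = 35 * u ^ 4 - 350 * u ^ 3 + 945 * u ^ 2 - 630 * u + 99225 := by
  -- `2*u = n^2 - 7n + 12` since the latter is `(n-4)*(n-3)`, even
  have h2 : 2 * u = (n : ℤ) ^ 2 - 7 * (n : ℤ) + 12 := by
    obtain ⟨c, hc⟩ := Int.even_mul_succ_self ((n : ℤ) - 4)
    have hc' : (n : ℤ) ^ 2 - 7 * (n : ℤ) + 12 = 2 * c := by linear_combination hc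
    rw [hu, hc', Int.mul_ediv_cancel_left _ (by norm_num)]
  -- `(m-1)*m = 2 * choose n 8 + 2`
  have hd : m.descFactorial 2 = 2 * (n.choose 8 + 1) := by
    rw [Nat.descFactorial_eq_factorial_mul_choose, h]; norm_num
  have h1n : (m - 1) * m = 2 * n.choose 8 + 2 := by
    simpa [Nat.descFactorial, Nat.mul_add] using hd
  rcases lt_or_ge n 8 with hn8 | hn8
  · -- small n: choose n 8 = 0, so m = 2
    have hN : n.choose 8 = 0 := Nat.choose_eq_zero_of_lt hn8
    rw [hN] at h1n
    have hmle : m ≤ 2 := by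
      by_contra hh
      push_neg at hh
      have : 2 * 3 ≤ (m - 1) * m := Nat.mul_le_mul (by omega) (by omega)
      omega
    have hm2 : m = 2 := by
      interval_cases m <;> omega
    subst hm2 hv
    have hu4 : u = 2 * u / 2 := by omega
    rw [h2] at hu4
    interval_cases n <;> norm_num at hu4 <;> subst hu4 <;> norm_num
  · -- large n : n = k + 8
    obtain ⟨k, rfl⟩ : ∃ k, n = k + 8 := ⟨n - 8, by omega⟩
    have hprod : (k + 8).descFactorial 8 =
        (k+1)*(k+2)*(k+3)*(k+4)*(k+5)*(k+6)*(k+7)*(k+8) := by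
      simp [Nat.descFactorial]; ring
    have h3n : 40320 * (k + 8).choose 8 =
        (k+1)*(k+2)*(k+3)*(k+4)*(k+5)*(k+6)*(k+7)*(k+8) := by
      rw [← hprod, Nat.descFactorial_eq_factorial_mul_choose]; norm_num [Nat.factorial]
    have h3 : (40320 : ℤ) * ((k + 8).choose 8 : ℤ) =
        ((k:ℤ)+1)*((k:ℤ)+2)*((k:ℤ)+3)*((k:ℤ)+4)*((k:ℤ)+5)*((k:ℤ)+6)*((k:ℤ)+7)*((k:ℤ)+8) := by
      exact_mod_cast h3n
    have h1 : ((m:ℤ) - 1) * (m:ℤ) = 2 * ((k + 8).choose 8 : ℤ) + 2 := by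
      have := h1n
      zify [hm] at this
      linarith
    have h2' : 2 * u = ((k:ℤ) + 4) * ((k:ℤ) + 5) := by
      push_cast at h2
      linear_combination h2
    subst hv
    have key : 16 * ((210 * (m:ℤ) - 105) ^ 2) =
        16 * (35 * u ^ 4 - 350 * u ^ 3 + 945 * u ^ 2 - 630 * u + 99225) := by
      linear_combination 705600 * h1 + 35 * h3 -
        35 * ((2*u)^3 + (2*u)^2*(((k:ℤ)+4)*((k:ℤ)+5)) + (2*u)*(((k:ℤ)+4)*((k:ℤ)+5))^2
          + (((k:ℤ)+4)*((k:ℤ)+5))^3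
          - 20 * ((2*u)^2 + (2*u)*(((k:ℤ)+4)*((k:ℤ)+5)) + (((k:ℤ)+4)*((k:ℤ)+5))^2)
          + 108 * (2*u + ((k:ℤ)+4)*((k:ℤ)+5)) - 144) * h2'
    linarith
end

section
/- Let N be an integer with |N| ≥ 2. Every root ρ (real or complex) of the polynomial u^6 - 2u^4 + a₁u^3 + u^2 - a₁u + a₀, where a₁ = -2N^3 + 2N + 8/81 and a₀ = N^6 - 2N^4 - (8/81)N^3 + N^2 + (8/81)N - 4/675, satisfies |ρ| < |N| + 1. -/
/-!
With `c = N³ - N` and `t = ρ³ - ρ - c`, the polynomial is `t (t + 8/81) - 4/675`, so at a root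
`t (t + 8/81) = 4/675` forces `‖t‖ < 1`. On the other hand, if `‖ρ‖ ≥ |N| + 1` then
`‖ρ³ - ρ‖ ≥ (|N| + 1)³ - (|N| + 1)` exceeds `‖c‖ ≤ |N|³ + |N|` by `3|N|² + |N| ≥ 1`.
-/

section NormedDivisionRing

variable {𝕜 : Type*} [NormedDivisionRing 𝕜]

theorem norm_lt_one_of_mul_add_eq {t b d : 𝕜} (hbd : ‖b‖ + ‖d‖ < 1) (h : t * (t + b) = d) :
    ‖t‖ < 1 := by
  by_contra! ht
  have hlower : ‖t‖ - ‖b‖ ≤ ‖t + b‖ := by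
    simpa using norm_sub_norm_le t (-b)
  have hd : ‖t‖ * ‖t + b‖ = ‖d‖ := by rw [← norm_mul, h]
  nlinarith [norm_nonneg b, norm_nonneg d]

theorem norm_sub_sub_ge_of_norm_add_one_le {z w : 𝕜} (hzw : ‖w‖ + 1 ≤ ‖z‖) :
    3 * ‖w‖ ^ 2 + ‖w‖ ≤ ‖(z ^ 3 - z) - (w ^ 3 - w)‖ := by
  have hz : ‖z‖ ^ 3 - ‖z‖ ≤ ‖z ^ 3 - z‖ := norm_pow z 3 ▸ norm_sub_norm_le (z ^ 3) z
  have hw : ‖w ^ 3 - w‖ ≤ ‖w‖ ^ 3 + ‖w‖ := norm_pow w 3 ▸ norm_sub_le (w ^ 3) w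
  have hmono : (‖w‖ + 1) ^ 3 - (‖w‖ + 1) ≤ ‖z‖ ^ 3 - ‖z‖ := by
    have hfactor : 0 ≤ (‖z‖ - (‖w‖ + 1)) * (‖z‖ ^ 2 + ‖z‖ * (‖w‖ + 1) + (‖w‖ + 1) ^ 2 - 1) :=
      mul_nonneg (by linarith) (by nlinarith [norm_nonneg w])
    nlinarith
  have hdiff := norm_sub_norm_le (z ^ 3 - z) (w ^ 3 - w)
  nlinarith

end NormedDivisionRing

/-- Every complex root ρ of u^6 - 2u^4 + a₁u^3 + u^2 - a₁u + a₀, where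
a₁ = -2N³ + 2N + 8/81 and a₀ = N⁶ - 2N⁴ - (8/81)N³ + N² + (8/81)N - 4/675,
satisfies |ρ| < |N| + 1, for any integer N with |N| ≥ 2. -/
theorem stmt15 (N : ℤ) (hN : 2 ≤ |N|) (ρ : ℂ)
    (a₁ a₀ : ℂ)
    (ha₁ : a₁ = -2 * (N : ℂ) ^ 3 + 2 * (N : ℂ) + 8 / 81)
    (ha₀ : a₀ = (N : ℂ) ^ 6 - 2 * (N : ℂ) ^ 4 - (8 / 81) * (N : ℂ) ^ 3 + (N : ℂ) ^ 2
      + (8 / 81) * (N : ℂ) - 4 / 675)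
    (hroot : ρ ^ 6 - 2 * ρ ^ 4 + a₁ * ρ ^ 3 + ρ ^ 2 - a₁ * ρ + a₀ = 0) :
    ‖ρ‖ < |(N : ℝ)| + 1 := by
  set t : ℂ := (ρ ^ 3 - ρ) - ((N : ℂ) ^ 3 - N)
  have ht : t * (t + 8 / 81) = 4 / 675 := by
    subst ha₁ ha₀
    linear_combination hroot
  have ht_small : ‖t‖ < 1 := norm_lt_one_of_mul_add_eq (by norm_num) ht
  have hnormN : ‖(N : ℂ)‖ = |(N : ℝ)| := Complex.norm_intCast N
  have hN' : (2 : ℝ) ≤ |(N : ℝ)| := by exact_mod_cast hN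
  by_contra! hρ
  have ht_large := norm_sub_sub_ge_of_norm_add_one_le (hnormN ▸ hρ : ‖(N : ℂ)‖ + 1 ≤ ‖ρ‖)
  rw [hnormN] at ht_large
  nlinarith
end
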